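/- arXiv:2202.07929 — 4 statements merged into one kernel-verified Lean document; each statement's English description precedes it below -/
import Mathlib

section
/- Let G be an equimatchable graph and v a vertex of G. Then the vertex-deleted subgraph G − v is equimatchable if and only if either (i) v is a strong vertex of G, or (ii) every vertex of N(v) is a strong vertex of G − v. -/
open SimpleGraph

/-- `M` is a maximal matching of `G` (viewed as a subgraph of `G`): it is a matching and it is
not properly contained in any other matching of `G`. -/
def IsMaximalMatching {V : Type*} (G : SimpleGraph V) (M : G.Subgraph) : Prop :=
  M.IsMatching ∧ ∀ M' : G.Subgraph, M'.IsMatching → M ≤ M' → M' = M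

/-- `G` is equimatchable if all maximal matchings of `G` have the same cardinality. -/
def Equimatchable {V : Type*} (G : SimpleGraph V) : Prop :=
  ∀ M₁ M₂ : G.Subgraph, IsMaximalMatching G M₁ → IsMaximalMatching G M₂ →
    M₁.edgeSet.ncard = M₂.edgeSet.ncard

/-- The matching number ν(G): the maximum cardinality of a matching of `G`. -/
noncomputable def matchNum {V : Type*} (G : SimpleGraph V) : ℕ :=
  sSup {n : ℕ | ∃ M : G.Subgraph, M.IsMatching ∧ M.edgeSet.ncard = n}

/-- `G` is vertex-critical equimatchable (VCE): `G` is equimatchable and deleting any vertex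
yields a non-equimatchable graph. -/
def VCE {V : Type*} (G : SimpleGraph V) : Prop :=
  Equimatchable G ∧ ∀ v : V, ¬ Equimatchable (G.induce {u | u ≠ v})

/-- `G` is edge-critical equimatchable (ECE): `G` is equimatchable and deleting any edge
yields a non-equimatchable graph. -/
def ECE {V : Type*} (G : SimpleGraph V) : Prop :=
  Equimatchable G ∧ ∀ u v : V, G.Adj u v → ¬ Equimatchable (G.deleteEdges {s(u, v)})

/-- `G` is factor-critical: deleting any vertex yields a graph with a perfect matching. -/
def FactorCritical {V : Type*} (G : SimpleGraph V) : Prop :=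
  ∀ v : V, ∃ M : (G.induce {u | u ≠ v}).Subgraph, M.IsPerfectMatching

/-- `G` is 2-connected: at least 3 vertices, connected, and deleting any vertex leaves a
connected graph. -/
def TwoConnected {V : Type*} [Fintype V] (G : SimpleGraph V) : Prop :=
  3 ≤ Fintype.card V ∧ G.Connected ∧ ∀ v : V, (G.induce {u | u ≠ v}).Connected

/-- `G` is bipartite: its vertex set can be partitioned into two parts such that every edge
joins the two parts. -/
def IsBipartiteGraph {V : Type*} (G : SimpleGraph V) : Prop :=
  ∃ s : Set V, ∀ u w : V, G.Adj u w → (u ∈ s ↔ w ∉ s)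

/-- `G` is randomly matchable: every matching of `G` extends to a perfect matching. -/
def RandomlyMatchable {V : Type*} (G : SimpleGraph V) : Prop :=
  ∀ M : G.Subgraph, M.IsMatching → ∃ P : G.Subgraph, M ≤ P ∧ P.IsPerfectMatching

/-! Write `ι` for the inclusion of `G − v` into `G`. If `M` is a maximal matching of `G − v` and
`M'` a maximal matching of `G` containing `ι M`, then every edge of `M'` avoiding `v` already
lies in `ι M`, since a maximal matching meets every edge; so `M'` has `|M| + 1` or `|M|` edges
according as it saturates `v` or not. If `v` is strong, every such extension adds one edge; if all
neighbours of `v` are strong in `G − v`, then `v` is never saturated and no edge is added. Either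
way equimatchability passes from `G` to `G − v`. Conversely, if `v` is not strong, a maximal
matching of `G` missing `v` is a maximal matching of `G − v`; and if a maximal matching `M` of
`G − v` missed a neighbour `u` of `v`, then `ι M + vu` would extend to a maximal matching of `G`
with more edges. -/

section

variable {V : Type*} {G : SimpleGraph V}

theorem isMaximalMatching_iff_maximal {M : G.Subgraph} :
    IsMaximalMatching G M ↔ Maximal Subgraph.IsMatching M :=
  ⟨fun h => ⟨h.1, fun M' hM' hle => (h.2 M' hM' hle).le⟩,
    fun h => ⟨h.1, fun _ hM' hle => le_antisymm (h.2 hM' hle) hle⟩⟩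

theorem exists_isMaximalMatching_ge [Finite V] {M : G.Subgraph} (hM : M.IsMatching) :
    ∃ M', IsMaximalMatching G M' ∧ M ≤ M' := by
  obtain ⟨M', hle, hmax⟩ := Finite.exists_le_maximal hM
  exact ⟨M', isMaximalMatching_iff_maximal.2 hmax, hle⟩

theorem SimpleGraph.Subgraph.ncard_edgeSet_map {W : Type*} {G' : SimpleGraph W} {f : G →g G'}
    (hf : Function.Injective f) (M : G.Subgraph) :
    (M.map f).edgeSet.ncard = M.edgeSet.ncard := by
  rw [edgeSet_map]
  exact Set.ncard_image_of_injective _ (Sym2.map.injective hf)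

theorem SimpleGraph.Subgraph.IsMatching.sup_subgraphOfAdj {M : G.Subgraph} (hM : M.IsMatching)
    {a b : V} (hab : G.Adj a b) (ha : a ∉ M.verts) (hb : b ∉ M.verts) :
    (M ⊔ G.subgraphOfAdj hab).IsMatching := by
  refine hM.sup (.subgraphOfAdj hab) ?_
  rw [hM.support_eq_verts, support_subgraphOfAdj, Set.disjoint_right]
  rintro x (rfl | rfl) <;> assumption

theorem SimpleGraph.Subgraph.IsMatching.adj_of_le {N M : G.Subgraph} (hN : N.IsMatching)
    (hM : M.IsMatching) (hle : N ≤ M) {a b : V} (ha : a ∈ N.verts) (hab : M.Adj a b) :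
    N.Adj a b := by
  obtain ⟨c, hc, -⟩ := hN ha
  rwa [hM.eq_of_adj_left hab (hle.2 hc)]

theorem IsMaximalMatching.mem_verts_or_mem_verts {M : G.Subgraph} (hM : IsMaximalMatching G M)
    {a b : V} (hab : G.Adj a b) : a ∈ M.verts ∨ b ∈ M.verts := by
  by_contra! h
  have hsup := hM.2 _ (hM.1.sup_subgraphOfAdj hab h.1 h.2) le_sup_left
  exact h.1 (hsup ▸ Or.inr (by simp))

end

section induce

variable {V : Type*} {G : SimpleGraph V} {s : Set V}

theorem SimpleGraph.Subgraph.notMem_map_induce_verts (M : (G.induce s).Subgraph) {v : V}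
    (hv : v ∉ s) : v ∉ (M.map (Embedding.induce s).toHom).verts := by
  rintro ⟨x, -, rfl⟩
  exact hv x.2

theorem SimpleGraph.Subgraph.IsMatching.map_induce {M : (G.induce s).Subgraph}
    (hM : M.IsMatching) : (M.map (Embedding.induce s).toHom).IsMatching :=
  hM.map _ (Embedding.induce (G := G) s).injective

theorem SimpleGraph.Subgraph.ncard_edgeSet_map_induce (M : (G.induce s).Subgraph) :
    (M.map (Embedding.induce s).toHom).edgeSet.ncard = M.edgeSet.ncard :=
  ncard_edgeSet_map (Embedding.induce (G := G) s).injective M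

theorem IsMaximalMatching.map_induce_adj_of_le {M : (G.induce s).Subgraph}
    (hM : IsMaximalMatching _ M) {M' : G.Subgraph} (hM' : M'.IsMatching)
    (hle : M.map (Embedding.induce s).toHom ≤ M') {a b : V} (hab : M'.Adj a b)
    (ha : a ∈ s) (hb : b ∈ s) : (M.map (Embedding.induce s).toHom).Adj a b := by
  rcases hM.mem_verts_or_mem_verts (show (G.induce s).Adj ⟨a, ha⟩ ⟨b, hb⟩ from M'.adj_sub hab)
    with h | h
  · exact hM.1.map_induce.adj_of_le hM' hle ⟨_, h, rfl⟩ hab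
  · exact (hM.1.map_induce.adj_of_le hM' hle ⟨_, h, rfl⟩ hab.symm).symm

theorem IsMaximalMatching.map_induce_eq_of_le {M : (G.induce s).Subgraph}
    (hM : IsMaximalMatching _ M) {M' : G.Subgraph} (hM' : M'.IsMatching)
    (hle : M.map (Embedding.induce s).toHom ≤ M') (hs : M'.verts ⊆ s) :
    M.map (Embedding.induce s).toHom = M' := by
  have hadj {a b : V} (hab : M'.Adj a b) : (M.map (Embedding.induce s).toHom).Adj a b :=
    hM.map_induce_adj_of_le hM' hle hab (hs (M'.edge_vert hab)) (hs (M'.edge_vert hab.symm))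
  refine le_antisymm hle ⟨fun a ha => ?_, fun _ _ => hadj⟩
  obtain ⟨b, hab, -⟩ := hM' ha
  exact (hadj hab).fst_mem

theorem IsMaximalMatching.exists_map_induce_eq {M' : G.Subgraph} (hM' : IsMaximalMatching G M')
    (hs : M'.verts ⊆ s) :
    ∃ M : (G.induce s).Subgraph, IsMaximalMatching _ M ∧
      M.map (Embedding.induce s).toHom = M' := by
  set ι := (Embedding.induce s).toHom
  have hmap : (M'.comap ι).map ι = M' := by
    refine le_antisymm ((Subgraph.map_le_iff_le_comap _ _ _).2 le_rfl) ⟨fun a ha => ?_, ?_⟩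
    · exact ⟨⟨a, hs ha⟩, ha, rfl⟩
    · intro a b hab
      exact ⟨⟨a, hs (M'.edge_vert hab)⟩, ⟨b, hs (M'.edge_vert hab.symm)⟩, ⟨M'.adj_sub hab, hab⟩,
        rfl, rfl⟩
  have hmatch : (M'.comap ι).IsMatching := by
    intro a ha
    obtain ⟨b, hab, huniq⟩ := hM'.1 ha
    exact ⟨⟨b, hs (M'.edge_vert hab.symm)⟩, ⟨M'.adj_sub hab, hab⟩,
      fun c hc => Subtype.ext (huniq _ hc.2)⟩
  refine ⟨M'.comap ι, ⟨hmatch, fun N hN hle => le_antisymm ?_ hle⟩, hmap⟩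
  have hN' := hM'.2 _ hN.map_induce (hmap ▸ Subgraph.map_mono hle)
  exact hN' ▸ (Subgraph.map_le_iff_le_comap _ _ _).1 le_rfl

theorem Equimatchable.induce_of_ncard_extension_eq_add [Finite V] (hG : Equimatchable G) (c : ℕ)
    (h : ∀ M M', IsMaximalMatching (G.induce s) M → IsMaximalMatching G M' →
      M.map (Embedding.induce s).toHom ≤ M' → M'.edgeSet.ncard = M.edgeSet.ncard + c) :
    Equimatchable (G.induce s) := by
  intro M₁ M₂ h₁ h₂
  obtain ⟨M₁', h₁', hle₁⟩ := exists_isMaximalMatching_ge h₁.1.map_induce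
  obtain ⟨M₂', h₂', hle₂⟩ := exists_isMaximalMatching_ge h₂.1.map_induce
  have := hG _ _ h₁' h₂'
  rw [h _ _ h₁ h₁' hle₁, h _ _ h₂ h₂' hle₂] at this
  omega

end induce

section deleteVert

variable {V : Type*} {G : SimpleGraph V} {v : V}

theorem IsMaximalMatching.ncard_edgeSet_eq_add_one_of_map_induce_le [Finite V]
    {M : (G.induce {u | u ≠ v}).Subgraph} (hM : IsMaximalMatching _ M) {M' : G.Subgraph}
    (hM' : M'.IsMatching) (hle : M.map (Embedding.induce _).toHom ≤ M') (hv : v ∈ M'.verts) :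
    M'.edgeSet.ncard = M.edgeSet.ncard + 1 := by
  obtain ⟨w, hw, -⟩ := hM' hv
  have hvw : s(v, w) ∉ (M.map (Embedding.induce _).toHom).edgeSet := fun h =>
    Subgraph.notMem_map_induce_verts M (fun h => h rfl) (Subgraph.edge_vert _ h)
  have hedges : M'.edgeSet = insert s(v, w) (M.map (Embedding.induce _).toHom).edgeSet := by
    refine (Set.insert_subset (Subgraph.mem_edgeSet.2 hw) (Subgraph.edgeSet_mono hle)).antisymm'
      fun e he => ?_
    induction e using Sym2.ind with | _ a b =>
    rw [Subgraph.mem_edgeSet] at he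
    by_cases ha : a = v
    · subst ha
      exact Or.inl (by rw [hM'.eq_of_adj_left he hw])
    by_cases hb : b = v
    · subst hb
      exact Or.inl (by rw [hM'.eq_of_adj_left he.symm hw, Sym2.eq_swap])
    exact Or.inr (hM.map_induce_adj_of_le hM' hle he ha hb)
  rw [hedges, Set.ncard_insert_of_notMem hvw, Subgraph.ncard_edgeSet_map_induce]

theorem SimpleGraph.Subgraph.IsMatching.notMem_verts_of_map_induce_le
    {M : (G.induce {u | u ≠ v}).Subgraph} (hM : M.IsMatching) {M' : G.Subgraph}
    (hM' : M'.IsMatching) (hle : M.map (Embedding.induce _).toHom ≤ M')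
    (hN : ∀ u : {u : V // u ∈ {u | u ≠ v}}, G.Adj v u → u ∈ M.verts) : v ∉ M'.verts := by
  intro hv
  obtain ⟨w, hw, -⟩ := hM' hv
  have hwM := hN ⟨w, (M'.adj_sub hw).ne'⟩ (M'.adj_sub hw)
  have hwv := hM.map_induce.adj_of_le hM' hle ⟨_, hwM, rfl⟩ hw.symm
  exact notMem_map_induce_verts M (fun h => h rfl) hwv.snd_mem

end deleteVert

/-- Let `G` be an equimatchable graph and `v` a vertex of `G`. Then `G − v` is equimatchable
if and only if either (i) `v` is a strong vertex of `G`, or (ii) every vertex of `N(v)` is a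
strong vertex of `G − v`. -/
theorem deleteVert_equimatchable_iff {V : Type*} [Fintype V] (G : SimpleGraph V)
    (hG : Equimatchable G) (v : V) :
    Equimatchable (G.induce {u | u ≠ v}) ↔
      ((∀ M : G.Subgraph, IsMaximalMatching G M → v ∈ M.verts) ∨
        (∀ u : {u : V // u ∈ {u | u ≠ v}}, G.Adj v ↑u →
          ∀ M : (G.induce {u | u ≠ v}).Subgraph,
            IsMaximalMatching (G.induce {u | u ≠ v}) M → u ∈ M.verts)) := by
  constructor
  · intro hH
    refine or_iff_not_imp_left.2 fun hv u hu M hM => ?_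
    push Not at hv
    obtain ⟨M₀, hM₀, hvM₀⟩ := hv
    obtain ⟨N₀, hN₀, rfl⟩ :=
      hM₀.exists_map_induce_eq (s := {u | u ≠ v}) fun x hx hxv => hvM₀ (hxv ▸ hx)
    by_contra huM
    obtain ⟨M', hM', hle⟩ := exists_isMaximalMatching_ge (hM.1.map_induce.sup_subgraphOfAdj hu
      (Subgraph.notMem_map_induce_verts M fun h => h rfl)
      ((Embedding.induce (G := G) _).injective.mem_set_image.not.2 huM))
    have hM'card := hM.ncard_edgeSet_eq_add_one_of_map_induce_le hM'.1 (le_sup_left.trans hle)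
      (hle.1 (Or.inr (by simp)))
    have hM'M₀ := hG _ _ hM' hM₀
    have hMN₀ := hH _ _ hM hN₀
    rw [Subgraph.ncard_edgeSet_map_induce] at hM'M₀
    omega
  · rintro (hstrong | hnbr)
    · exact hG.induce_of_ncard_extension_eq_add 1 fun M M' hM hM' hle =>
        hM.ncard_edgeSet_eq_add_one_of_map_induce_le hM'.1 hle (hstrong M' hM')
    · refine hG.induce_of_ncard_extension_eq_add 0 fun M M' hM hM' hle => ?_
      have hv := hM.1.notMem_verts_of_map_induce_le hM'.1 hle fun u hu => hnbr u hu M hM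
      rw [← hM.map_induce_eq_of_le hM'.1 hle fun x hx hxv => hv (hxv ▸ hx),
        Subgraph.ncard_edgeSet_map_induce]
      rfl
end

section
/- Let G be a factor-critical edge-critical equimatchable graph. Then there is no edge uv of G with N(u) ∪ N(v) = V(G). -/
open SimpleGraph

/-!
Deleting a dominating edge `uv` from `G` keeps every maximal matching maximal: a maximal matching
of `G - uv` saturating neither `u` nor `v` must saturate every other vertex, since each of them is
adjacent to `u` or `v`; it would then saturate exactly `V ∖ {u, v}`, a set of odd size because a
factor-critical graph has an odd number of vertices. So `G - uv` inherits equimatchability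
from `G`, against edge-criticality.
-/

namespace SimpleGraph.Subgraph

variable {V : Type*} {G : SimpleGraph V} {M M' : G.Subgraph}

lemma IsMatching.even_ncard_verts [Finite V] (hM : M.IsMatching) : Even M.verts.ncard := by
  have := Fintype.ofFinite M.verts
  rw [Set.ncard_eq_toFinset_card']
  exact hM.even_card

lemma IsMatching.adj_of_le_s9 (hM : M.IsMatching) (hM' : M'.IsMatching) (hle : M ≤ M')
    {a b : V} (ha : a ∈ M.verts) (hab : M'.Adj a b) : M.Adj a b := by
  obtain ⟨c, hac, -⟩ := hM ha
  rwa [hM'.eq_of_adj_left hab (hle.2 hac)]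

end SimpleGraph.Subgraph

open SimpleGraph.Subgraph

theorem isMaximalMatching_iff {V : Type*} {G : SimpleGraph V} {M : G.Subgraph} :
    IsMaximalMatching G M ↔ M.IsMatching ∧ ∀ ⦃x y⦄, G.Adj x y → x ∈ M.verts ∨ y ∈ M.verts := by
  refine ⟨fun hM => ⟨hM.1, fun x y hxy => ?_⟩, fun ⟨hM, hcover⟩ => ⟨hM, fun M' hM' hle => ?_⟩⟩
  · by_contra! hfree
    have hdisj : Disjoint M.support (G.subgraphOfAdj hxy).support := by
      rw [hM.1.support_eq_verts, (IsMatching.subgraphOfAdj hxy).support_eq_verts]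
      simp [hfree.1, hfree.2]
    have hext := hM.1.sup (IsMatching.subgraphOfAdj hxy) hdisj
    have hx : x ∈ (M ⊔ G.subgraphOfAdj hxy).verts := Or.inr (by simp)
    exact hfree.1 (hM.2 _ hext le_sup_left ▸ hx)
  · have hverts : M'.verts ⊆ M.verts := by
      intro a ha
      obtain ⟨b, hab, -⟩ := hM' ha
      rcases hcover (M'.adj_sub hab) with ha | hb
      · exact ha
      · exact M.edge_vert (hM.adj_of_le_s9 hM' hle hb hab.symm).symm
    refine le_antisymm ?_ hle
    exact ⟨hverts, fun a b hab => hM.adj_of_le_s9 hM' hle (hverts (M'.edge_vert hab)) hab⟩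

theorem FactorCritical.odd_card {V : Type*} [Finite V] [Nonempty V] {G : SimpleGraph V}
    (hG : FactorCritical G) : Odd (Nat.card V) := by
  obtain ⟨v⟩ := ‹Nonempty V›
  obtain ⟨M, hM⟩ := hG v
  have heven : Even (Set.univ : Set {u | u ≠ v}).ncard := by
    simpa [hM.2.verts_eq_univ] using hM.1.even_ncard_verts
  rw [Set.ncard_univ, Nat.card_coe_set_eq, ← Set.compl_singleton_eq v] at heven
  rw [← Set.ncard_compl_add_ncard {v}, Set.ncard_singleton]
  exact heven.add_one

theorem Equimatchable.of_le {V : Type*} {G G' : SimpleGraph V} (h : G' ≤ G) (hG : Equimatchable G)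
    (hmax : ∀ M : G'.Subgraph, IsMaximalMatching G' M → IsMaximalMatching G (M.map (.ofLE h))) :
    Equimatchable G' := by
  intro M₁ M₂ h₁ h₂
  simpa using hG _ _ (hmax M₁ h₁) (hmax M₂ h₂)

theorem IsMaximalMatching.map_ofLE_deleteEdges_of_dominating {V : Type*} [Finite V]
    {G : SimpleGraph V} {u v : V} (hodd : Odd (Nat.card V)) (huv : u ≠ v)
    (hdom : G.neighborSet u ∪ G.neighborSet v = Set.univ)
    {M : (G.deleteEdges {s(u, v)}).Subgraph} (hM : IsMaximalMatching _ M) :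
    IsMaximalMatching G (M.map (.ofLE (G.deleteEdges_le _))) := by
  obtain ⟨hM, hcover⟩ := isMaximalMatching_iff.1 hM
  refine isMaximalMatching_iff.2 ⟨hM.map_ofLE _, fun x y hxy => ?_⟩
  simp only [map_verts, Hom.coe_ofLE, Set.image_id]
  by_cases he : s(x, y) = s(u, v)
  · suffices u ∈ M.verts ∨ v ∈ M.verts by
      rcases Sym2.eq_iff.1 he with ⟨rfl, rfl⟩ | ⟨rfl, rfl⟩ <;> tauto
    by_contra! hfree
    have hverts : M.verts = {u, v}ᶜ := by
      ext w
      refine ⟨by rintro hw (rfl | rfl) <;> tauto, fun hw => ?_⟩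
      simp only [Set.mem_compl_iff, Set.mem_insert_iff, Set.mem_singleton_iff, not_or] at hw
      have hw' : G.Adj u w ∨ G.Adj v w := (Set.ext_iff.1 hdom w).2 trivial
      rcases hw' with hwu | hwv
      · refine (hcover (x := u) ?_).resolve_left hfree.1
        simp [SimpleGraph.deleteEdges_adj, hwu, hw.2, huv]
      · refine (hcover (x := v) ?_).resolve_left hfree.2
        simp [SimpleGraph.deleteEdges_adj, hwv, hw.1, huv.symm]
    have heven := hM.even_ncard_verts
    rw [hverts] at heven
    rw [← Set.ncard_compl_add_ncard {u, v}, Set.ncard_pair huv] at hodd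
    exact Nat.not_even_iff_odd.2 hodd (heven.add (by decide))
  · exact hcover (by simp [SimpleGraph.deleteEdges_adj, hxy, he])

/-- Let `G` be a factor-critical edge-critical equimatchable graph. Then there is no edge `uv`
of `G` with `N(u) ∪ N(v) = V(G)`. -/
theorem fc_ece_no_dominating_edge {V : Type*} [Fintype V] (G : SimpleGraph V)
    (hfc : FactorCritical G) (hece : ECE G) :
    ¬ ∃ u v : V, G.Adj u v ∧ G.neighborSet u ∪ G.neighborSet v = Set.univ := by
  rintro ⟨u, v, huv, hdom⟩
  have : Nonempty V := ⟨u⟩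
  refine hece.2 u v huv (hece.1.of_le (G.deleteEdges_le _) fun M hM => ?_)
  exact hM.map_ofLE_deleteEdges_of_dominating hfc.odd_card huv.ne hdom
end

section
/- Every connected randomly matchable graph with at least 4 vertices is edge-critical equimatchable. -/
open SimpleGraph

/-!
A maximal matching of a randomly matchable graph extends to a perfect matching and hence is
perfect, so all maximal matchings have `|V| / 2` edges. For an edge `uv`, connectivity and
`|V| ≥ 3` give a neighbour `w ∉ {u, v}` of `u` (or of `v`); extending `uw` to a perfect matching
gives one avoiding `uv`, which stays perfect, hence maximal, in `G - uv`. Extending `uv` instead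
gives a perfect matching `P`, and `P - uv` is maximal in `G - uv` because only `u` and `v` are
left unsaturated and they are no longer adjacent; it has one edge fewer.
-/

namespace SimpleGraph

variable {V : Type*} {G G' : SimpleGraph V}

theorem Connected.exists_adj_notMem_pair [Fintype V] (hG : G.Connected)
    (hcard : 2 < Fintype.card V) (u v : V) :
    ∃ w, w ≠ u ∧ w ≠ v ∧ (G.Adj u w ∨ G.Adj v w) := by
  classical
  obtain ⟨z, -, hz⟩ := Finset.exists_mem_notMem_of_card_lt_card
    (Finset.card_le_two.trans_lt hcard : ({u, v} : Finset V).card < Finset.univ.card)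
  obtain ⟨⟨⟨a, w⟩, haw⟩, -, ha, hw⟩ :=
    (hG u z).some.exists_boundary_dart {u, v} (by simp) (by simpa using hz)
  simp only [Set.mem_insert_iff, Set.mem_singleton_iff, not_or] at ha hw
  rcases ha with rfl | rfl
  · exact ⟨w, hw.1, hw.2, .inl haw⟩
  · exact ⟨w, hw.1, hw.2, .inr haw⟩

namespace Subgraph

theorem IsMatching.ncard_verts [Finite V] {M : G.Subgraph} (hM : M.IsMatching) :
    M.verts.ncard = 2 * M.edgeSet.ncard := by
  classical
  have := Fintype.ofFinite V
  have hdeg (v : M.verts) : M.coe.degree v = 1 := by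
    rw [coe_degree]
    convert isMatching_iff_forall_degree.1 hM v v.2
  calc M.verts.ncard = ∑ v : M.verts, M.coe.degree v := by
        simp [hdeg, ← Nat.card_coe_set_eq]
    _ = 2 * M.coe.edgeFinset.card := by convert M.coe.sum_degrees_eq_twice_card_edges
    _ = 2 * M.edgeSet.ncard := by
        rw [← image_coe_edgeSet_coe, Set.ncard_image_of_injective _
          (Sym2.map.injective Subtype.val_injective), ← coe_edgeFinset, Set.ncard_coe_finset]

theorem IsMatching.isMaximalMatching_of_forall_not_adj {M : G.Subgraph} (hM : M.IsMatching)
    (h : ∀ x y, x ∉ M.verts → y ∉ M.verts → ¬ G.Adj x y) : IsMaximalMatching G M := by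
  refine ⟨hM, fun M' hM' hle => le_antisymm ?_ hle⟩
  have hverts : M'.verts ⊆ M.verts := by
    intro x hx
    by_contra hxM
    obtain ⟨y, hxy, -⟩ := hM' hx
    by_cases hy : y ∈ M.verts
    · obtain ⟨z, hyz, -⟩ := hM hy
      obtain rfl : z = x := hM'.eq_of_adj_left (hle.2 hyz) hxy.symm
      exact hxM (M.edge_vert hyz.symm)
    · exact h x y hxM hy (M'.adj_sub hxy)
  refine ⟨hverts, fun x y hxy => ?_⟩
  obtain ⟨z, hxz, -⟩ := hM (hverts (M'.edge_vert hxy))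
  rwa [hM'.eq_of_adj_left hxy (hle.2 hxz)]

theorem IsPerfectMatching.isMaximalMatching {M : G.Subgraph} (hM : M.IsPerfectMatching) :
    IsMaximalMatching G M :=
  hM.1.isMaximalMatching_of_forall_not_adj fun x _ hx => (hx (hM.2 x)).elim

theorem IsPerfectMatching.two_mul_ncard_edgeSet [Finite V] {M : G.Subgraph}
    (hM : M.IsPerfectMatching) : 2 * M.edgeSet.ncard = Nat.card V := by
  rw [← hM.1.ncard_verts, hM.2.verts_eq_univ, Set.ncard_univ]

theorem IsMatching.comap_ofLE {M : G.Subgraph} (hM : M.IsMatching) (h : G' ≤ G)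
    (hG' : ∀ ⦃a b⦄, M.Adj a b → G'.Adj a b) : (M.comap (Hom.ofLE h)).IsMatching := by
  intro x hx
  obtain ⟨y, hxy, huniq⟩ := hM hx
  exact ⟨y, ⟨hG' hxy, hxy⟩, fun z hz => huniq z hz.2⟩

theorem IsMatching.deleteVerts_pair {M : G.Subgraph} (hM : M.IsMatching) {u v : V}
    (huv : M.Adj u v) : (M.deleteVerts {u, v}).IsMatching := by
  rintro x ⟨hxM, hxuv⟩
  obtain ⟨y, hxy, huniq⟩ := hM hxM
  have hyuv : y ∉ ({u, v} : Set V) := by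
    rintro (rfl | rfl)
    · exact hxuv (.inr (hM.eq_of_adj_right hxy huv.symm))
    · exact hxuv (.inl (hM.eq_of_adj_right hxy huv))
  exact ⟨y, deleteVerts_adj.2 ⟨hxM, hxuv, M.edge_vert hxy.symm, hyuv, hxy⟩,
    fun z hz => huniq z (deleteVerts_adj.1 hz).2.2.2.2⟩

end Subgraph

end SimpleGraph

namespace RandomlyMatchable

variable {V : Type*} {G : SimpleGraph V}

theorem isPerfectMatching_of_isMaximalMatching (hG : RandomlyMatchable G) {M : G.Subgraph}
    (hM : IsMaximalMatching G M) : M.IsPerfectMatching := by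
  obtain ⟨P, hle, hP⟩ := hG M hM.1
  rwa [← hM.2 P hP.1 hle]

theorem equimatchable [Finite V] (hG : RandomlyMatchable G) : Equimatchable G := by
  intro M₁ M₂ h₁ h₂
  have hM₁ := (hG.isPerfectMatching_of_isMaximalMatching h₁).two_mul_ncard_edgeSet
  have hM₂ := (hG.isPerfectMatching_of_isMaximalMatching h₂).two_mul_ncard_edgeSet
  omega

theorem exists_isPerfectMatching_not_adj (hG : RandomlyMatchable G) {u v w : V}
    (huw : G.Adj u w) (hwv : w ≠ v) : ∃ Q : G.Subgraph, Q.IsPerfectMatching ∧ ¬ Q.Adj u v := by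
  obtain ⟨Q, hle, hQ⟩ := hG _ (Subgraph.IsMatching.subgraphOfAdj huw)
  exact ⟨Q, hQ, fun huv => hwv (hQ.1.eq_of_adj_left (hle.2 (by simp)) huv)⟩

end RandomlyMatchable

theorem not_equimatchable_deleteEdges {V : Type*} [Finite V] {G : SimpleGraph V}
    {P Q : G.Subgraph} (hP : P.IsPerfectMatching) (hQ : Q.IsPerfectMatching) {u v : V}
    (hPuv : P.Adj u v) (hQuv : ¬ Q.Adj u v) : ¬ Equimatchable (G.deleteEdges {s(u, v)}) := by
  intro hG'
  set f := Hom.ofLE (G.deleteEdges_le {s(u, v)})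
  have hQ' : (Q.comap f).IsPerfectMatching := by
    refine ⟨hQ.1.comap_ofLE _ fun a b hab => ?_, hQ.2⟩
    refine (deleteEdges_adj ..).2 ⟨Q.adj_sub hab, fun he => hQuv ?_⟩
    rcases Sym2.eq_iff.1 (Set.mem_singleton_iff.1 he) with ⟨rfl, rfl⟩ | ⟨rfl, rfl⟩
    exacts [hab, hab.symm]
  set N := (P.deleteVerts {u, v}).comap f
  have hNverts : N.verts = {u, v}ᶜ := by
    rw [Set.compl_eq_univ_sdiff, ← hP.2.verts_eq_univ]
    rfl
  have hN : N.IsMatching := by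
    refine (hP.1.deleteVerts_pair hPuv).comap_ofLE _ fun a b hab => ?_
    obtain ⟨-, ha, -, -, hab⟩ := Subgraph.deleteVerts_adj.1 hab
    refine (deleteEdges_adj ..).2 ⟨P.adj_sub hab, fun he => ha ?_⟩
    exact Sym2.mem_iff.1 (Set.mem_singleton_iff.1 he ▸ Sym2.mem_mk_left a b)
  have hNmax : IsMaximalMatching _ N := by
    refine hN.isMaximalMatching_of_forall_not_adj fun x y hx hy hxy => ?_
    rw [hNverts, Set.notMem_compl_iff, Set.mem_insert_iff, Set.mem_singleton_iff,
      ← Sym2.mem_iff] at hx hy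
    exact ((deleteEdges_adj ..).1 hxy).2 ((Sym2.mem_and_mem_iff hxy.ne).1 ⟨hx, hy⟩).symm
  have hcard := Set.ncard_add_ncard_compl ({u, v} : Set V)
  rw [Set.ncard_pair (G.ne_of_adj (P.adj_sub hPuv)), ← hNverts, hN.ncard_verts] at hcard
  have hQcard := hQ'.two_mul_ncard_edgeSet
  have hsame := hG' _ _ hQ'.isMaximalMatching hNmax
  omega

/-- Every connected randomly matchable graph with at least 4 vertices is edge-critical
equimatchable. -/
theorem randomlyMatchable_ece {V : Type*} [Fintype V] (G : SimpleGraph V)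
    (hconn : G.Connected) (hcard : 4 ≤ Fintype.card V) (hrm : RandomlyMatchable G) :
    ECE G := by
  refine ⟨hrm.equimatchable, fun u v huv => ?_⟩
  obtain ⟨P, hle, hP⟩ := hrm _ (Subgraph.IsMatching.subgraphOfAdj huv)
  have hPuv : P.Adj u v := hle.2 (by simp)
  obtain ⟨w, hwu, hwv, huw | hvw⟩ := hconn.exists_adj_notMem_pair (by omega) u v
  · obtain ⟨Q, hQ, hQuv⟩ := hrm.exists_isPerfectMatching_not_adj huw hwv
    exact not_equimatchable_deleteEdges hP hQ hPuv hQuv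
  · obtain ⟨Q, hQ, hQvu⟩ := hrm.exists_isPerfectMatching_not_adj hvw hwu
    exact not_equimatchable_deleteEdges hP hQ hPuv fun h => hQvu h.symm
end

section
/- Every connected edge-critical equimatchable graph with at least one edge is 2-connected. -/
open SimpleGraph

/-!
If `G` had only two vertices, deleting its edge would leave an edgeless, hence equimatchable,
graph. Now let `v` be a cut vertex, `S` a component of `G - v`, and `x ∈ S`, `y ∉ S` neighbours
of `v`. As `G` is equimatchable but `G - xv` is not, some maximal matching of `G - xv` misses `x`
and `v`; adding `xv` to it gives a maximal matching `N` of `G` saturating all neighbours of `x`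
and of `v`. Likewise there is such an `N'` through `vy`. Exchanging the parts of `N` and `N'`
inside `S` gives two more maximal matchings, which together use all edges of `N` and `N'` but
`xv`; so the four sizes cannot be equal.
-/

namespace SimpleGraph

variable {V : Type*} {G : SimpleGraph V}

section DeleteEdge

variable {c : Set V} {u v : V}

theorem IsVertexCover.of_deleteEdges (hc : (G.deleteEdges {s(u, v)}).IsVertexCover c)
    (huv : u ∈ c ∨ v ∈ c) : G.IsVertexCover c := by
  intro a b hab
  by_cases he : s(a, b) = s(u, v)
  · rcases Sym2.eq_iff.1 he with ⟨rfl, rfl⟩ | ⟨rfl, rfl⟩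
    exacts [huv, huv.symm]
  · exact hc (by simpa [deleteEdges_adj, hab] using he)

theorem IsVertexCover.neighborSet_subset_of_deleteEdges
    (hc : (G.deleteEdges {s(u, v)}).IsVertexCover c) (hu : u ∉ c) :
    G.neighborSet u ⊆ insert v c := by
  intro z (huz : G.Adj u z)
  by_cases hzv : z = v
  · exact Or.inl hzv
  refine Or.inr ((hc ?_).resolve_left hu)
  simpa [deleteEdges_adj, hzv, huz.ne'] using huz

end DeleteEdge

namespace Subgraph

theorem ncard_edgeSet_map_ofLE {G' : SimpleGraph V} (hle : G' ≤ G) (M : G'.Subgraph) :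
    (M.map (Hom.ofLE hle)).edgeSet.ncard = M.edgeSet.ncard := by
  simp

-- Only the vertices matched inside `S` are kept, so that `within` preserves matchings.
def within (M : G.Subgraph) (S : Set V) : G.Subgraph where
  verts := {u | u ∈ S ∧ ∃ w ∈ S, M.Adj u w}
  Adj u w := M.Adj u w ∧ u ∈ S ∧ w ∈ S
  adj_sub h := M.adj_sub h.1
  edge_vert h := ⟨h.2.1, _, h.2.2, h.1⟩
  symm := ⟨fun _ _ h => ⟨h.1.symm, h.2.2, h.2.1⟩⟩

variable {M M' : G.Subgraph} {S : Set V} {u w : V}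

theorem within_verts_subset : (M.within S).verts ⊆ S := fun _ h => And.left h

theorem mem_within_verts (h : M.Adj u w) (hu : u ∈ S) (hw : w ∈ S) : u ∈ (M.within S).verts :=
  ⟨hu, w, hw, h⟩

theorem IsMatching.within (hM : M.IsMatching) : (M.within S).IsMatching := by
  rintro u ⟨huS, w, hwS, huw⟩
  exact ⟨w, ⟨huw, huS, hwS⟩, fun y hy => hM.eq_of_adj_left (And.left hy) huw⟩

theorem IsMatching.within_sup_within_compl (hM : M.IsMatching) (hM' : M'.IsMatching) :
    (M.within S ⊔ M'.within Sᶜ).IsMatching := by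
  refine hM.within.sup hM'.within ?_
  rw [hM.within.support_eq_verts, hM'.within.support_eq_verts]
  exact disjoint_compl_right.mono within_verts_subset within_verts_subset

theorem within_sup_within_compl_le : M.within S ⊔ M.within Sᶜ ≤ M :=
  sup_le ⟨fun _ ⟨_, _, _, h⟩ => M.edge_vert h, fun _ _ h => And.left h⟩
    ⟨fun _ ⟨_, _, _, h⟩ => M.edge_vert h, fun _ _ h => And.left h⟩

theorem ncard_edgeSet_within_sup_within_compl [Finite V] (M M' : G.Subgraph) (S : Set V) :
    (M.within S ⊔ M'.within Sᶜ).edgeSet.ncard =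
      (M.within S).edgeSet.ncard + (M'.within Sᶜ).edgeSet.ncard := by
  rw [edgeSet_sup]
  refine Set.ncard_union_eq (Set.disjoint_left.2 fun e he he' => ?_) (Set.toFinite _)
    (Set.toFinite _)
  induction e using Sym2.ind with
  | _ p q => exact (Subgraph.mem_edgeSet.1 he').2.1 (Subgraph.mem_edgeSet.1 he).2.1

theorem ncard_edgeSet_lt_of_le [Finite V] {H : G.Subgraph} (hle : H ≤ M) (huw : M.Adj u w)
    (hnot : ¬ H.Adj u w) : H.edgeSet.ncard < M.edgeSet.ncard :=
  Set.ncard_lt_ncard ((edgeSet_mono hle).ssubset_of_ne fun h => hnot <| by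
      rw [← Subgraph.mem_edgeSet, h]; exact huw)
    (Set.toFinite _)

end Subgraph

def IsSeparatedBy (G : SimpleGraph V) (S : Set V) (v : V) : Prop :=
  ∀ ⦃p q⦄, G.Adj p q → p ∈ S → q ∉ S → p = v ∨ q = v

namespace IsSeparatedBy

variable {S : Set V} {v : V}

theorem compl (hS : G.IsSeparatedBy S v) : G.IsSeparatedBy Sᶜ v :=
  fun _ _ hpq hp hq => (hS hpq.symm (not_not.1 hq) hp).symm

theorem insert (hS : G.IsSeparatedBy S v) : G.IsSeparatedBy (insert v S) v := by
  rintro p q hpq (rfl | hp) hq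
  · exact Or.inl rfl
  · exact hS hpq hp fun hqS => hq (Or.inr hqS)

theorem exists_adj (hS : G.IsSeparatedBy S v) (hvS : v ∉ S) {a b : V} (W : G.Walk a b)
    (ha : a ∈ S) (hb : b ∉ S) : ∃ x ∈ S, G.Adj x v := by
  obtain ⟨d, -, hd₁, hd₂⟩ := W.exists_boundary_dart S ha hb
  refine ⟨d.fst, hd₁, ?_⟩
  rcases hS d.adj hd₁ hd₂ with h | h
  · exact absurd (h ▸ hd₁) hvS
  · exact h ▸ d.adj

end IsSeparatedBy

theorem exists_isSeparatedBy_of_not_preconnected (hconn : G.Connected) {v : V}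
    (h : ¬ (G.induce {u | u ≠ v}).Preconnected) :
    ∃ S, G.IsSeparatedBy S v ∧ v ∉ S ∧ (∃ x ∈ S, G.Adj x v) ∧ ∃ y ∉ S, G.Adj y v := by
  obtain ⟨a, b, hab⟩ : ∃ a b, ¬ (G.induce {u | u ≠ v}).Reachable a b := by
    simpa [Preconnected] using h
  let S : Set V := {z | ∃ hz : z ≠ v, (G.induce {u | u ≠ v}).Reachable a ⟨z, hz⟩}
  have hvS : v ∉ S := fun ⟨hv, _⟩ => hv rfl
  have hS : G.IsSeparatedBy S v := by
    rintro p q hpq ⟨hp, hap⟩ hq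
    by_contra! hpqv
    exact hq ⟨hpqv.2, hap.trans (Adj.reachable (by simpa using hpq))⟩
  have haS : a.1 ∈ S := ⟨a.2, by simp⟩
  have hbS : b.1 ∈ (insert v S)ᶜ := by
    rintro (hb | ⟨_, hb⟩)
    · exact b.2 hb
    · exact hab hb
  obtain ⟨W⟩ := hconn.preconnected a b
  obtain ⟨y, hy, hyv⟩ := hS.insert.compl.exists_adj (by simp) W.reverse hbS (by simp [haS])
  exact ⟨S, hS, hvS, hS.exists_adj hvS W haS fun h => hbS (Or.inr h),
    y, fun h => hy (Or.inr h), hyv⟩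

theorem Subgraph.IsMatching.mem_within_verts_of_ne {M : G.Subgraph} {S : Set V} {c v z : V}
    (hM : M.IsMatching) (hS : G.IsSeparatedBy S v) (hcv : M.Adj c v) (hz : z ∈ M.verts)
    (hzS : z ∈ S) (hzc : z ≠ c) (hzv : z ≠ v) : z ∈ (M.within S).verts := by
  obtain ⟨w, hzw, -⟩ := hM hz
  by_cases hwS : w ∈ S
  · exact mem_within_verts hzw hzS hwS
  rcases hS (M.adj_sub hzw) hzS hwS with h | h
  · exact absurd h hzv
  · exact absurd (hM.eq_of_adj_right hzw (h ▸ hcv)) hzc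

end SimpleGraph

section

variable {V : Type*} {G : SimpleGraph V}

theorem isMaximalMatching_iff_s11 {M : G.Subgraph} :
    IsMaximalMatching G M ↔ M.IsMatching ∧ G.IsVertexCover M.verts := by
  refine ⟨fun hM => ⟨hM.1, fun a b hab => ?_⟩, fun ⟨hM, hcov⟩ => ⟨hM, fun M' hM' hle => ?_⟩⟩
  · by_contra! hab'
    have hedge := Subgraph.IsMatching.subgraphOfAdj hab
    have hsup : (M ⊔ G.subgraphOfAdj hab).IsMatching := by
      refine hM.1.sup hedge ?_
      rw [hM.1.support_eq_verts, hedge.support_eq_verts, subgraphOfAdj_verts]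
      simp [hab'.1, hab'.2]
    exact hab'.1 (hM.2 _ hsup le_sup_left ▸ Or.inr (by simp))
  · have hadj : ∀ ⦃p q⦄, M'.Adj p q → M.Adj p q := by
      intro p q h
      rcases hcov (M'.adj_sub h) with hp | hq
      · obtain ⟨c, hc, -⟩ := hM hp
        rwa [hM'.eq_of_adj_left h (hle.2 hc)]
      · obtain ⟨c, hc, -⟩ := hM hq
        rw [hM'.eq_of_adj_right h (hle.2 hc).symm]
        exact hc.symm
    refine le_antisymm (show M' ≤ M from ⟨fun u hu => ?_, fun p q h => hadj h⟩) hle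
    obtain ⟨w, hw, -⟩ := hM' hu
    exact M.edge_vert (hadj hw)

theorem IsMaximalMatching.map_ofLE {G' : SimpleGraph V} (hle : G' ≤ G) {M : G'.Subgraph}
    (hM : IsMaximalMatching G' M) (hcov : G.IsVertexCover M.verts) :
    IsMaximalMatching G (M.map (Hom.ofLE hle)) := by
  refine isMaximalMatching_iff_s11.2 ⟨hM.1.map_ofLE hle, ?_⟩
  simpa using hcov

theorem equimatchable_bot : Equimatchable (⊥ : SimpleGraph V) := by
  have hempty (M : (⊥ : SimpleGraph V).Subgraph) : M.edgeSet = ∅ :=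
    Set.subset_empty_iff.1 (by simpa using M.edgeSet_subset)
  intro M₁ M₂ _ _
  rw [hempty M₁, hempty M₂]

theorem three_le_card_of_not_equimatchable_deleteEdges [Fintype V] {u v : V} (huv : G.Adj u v)
    (hne : ¬ Equimatchable (G.deleteEdges {s(u, v)})) : 3 ≤ Fintype.card V := by
  by_contra! hcard
  have hmem : ∀ z, z = u ∨ z = v := fun z => by
    by_contra! hz
    exact (Fintype.two_lt_card_iff.2 ⟨z, u, v, hz.1, hz.2, huv.ne⟩).not_ge (by omega)
  have hbot : G.deleteEdges {s(u, v)} = ⊥ := by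
    ext a b
    simp only [bot_adj, deleteEdges_adj, Set.mem_singleton_iff, iff_false, not_and, not_not]
    intro hab
    rcases hmem a with rfl | rfl <;> rcases hmem b with rfl | rfl
    all_goals first | exact (G.irrefl hab).elim | rfl | exact Sym2.eq_swap
  exact hne (hbot ▸ equimatchable_bot)

theorem Equimatchable.exists_isMaximalMatching_adj_neighborSet_subset {u v : V}
    (hEq : Equimatchable G) (huv : G.Adj u v) (hne : ¬ Equimatchable (G.deleteEdges {s(u, v)})) :
    ∃ N : G.Subgraph, IsMaximalMatching G N ∧ N.Adj u v ∧
      G.neighborSet u ⊆ N.verts ∧ G.neighborSet v ⊆ N.verts := by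
  have hle : G.deleteEdges {s(u, v)} ≤ G := deleteEdges_le _
  -- otherwise all maximal matchings of `G - uv` are maximal in `G`, so `G - uv` is equimatchable
  obtain ⟨M, hM, hu, hv⟩ : ∃ M : (G.deleteEdges {s(u, v)}).Subgraph,
      IsMaximalMatching _ M ∧ u ∉ M.verts ∧ v ∉ M.verts := by
    by_contra! h
    refine hne fun M₁ M₂ h₁ h₂ => ?_
    have hlift : ∀ M, IsMaximalMatching (G.deleteEdges {s(u, v)}) M →
        IsMaximalMatching G (M.map (Hom.ofLE hle)) := fun M hM =>
      hM.map_ofLE hle ((isMaximalMatching_iff_s11.1 hM).2.of_deleteEdges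
        (or_iff_not_imp_left.2 (h M hM)))
    rw [← Subgraph.ncard_edgeSet_map_ofLE hle M₁, ← Subgraph.ncard_edgeSet_map_ofLE hle M₂]
    exact hEq _ _ (hlift M₁ h₁) (hlift M₂ h₂)
  obtain ⟨hMm, hcov⟩ := isMaximalMatching_iff_s11.1 hM
  have hcov' : (G.deleteEdges {s(v, u)}).IsVertexCover M.verts := by rwa [Sym2.eq_swap]
  set N := M.map (Hom.ofLE hle) ⊔ G.subgraphOfAdj huv
  have hN : N.verts = insert u (insert v M.verts) := by simp [N]
  refine ⟨N, isMaximalMatching_iff_s11.2 ⟨?_, ?_⟩, by simp [N], ?_, ?_⟩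
  · refine (hMm.map_ofLE hle).sup (.subgraphOfAdj huv) ?_
    rw [(hMm.map_ofLE hle).support_eq_verts,
      (Subgraph.IsMatching.subgraphOfAdj huv).support_eq_verts]
    simp [hu, hv]
  · rw [hN]
    exact (hcov.subset fun _ h => Or.inr (Or.inr h)).of_deleteEdges (Or.inl (Or.inl rfl))
  · rw [hN]
    exact (hcov.neighborSet_subset_of_deleteEdges hu).trans (Set.subset_insert _ _)
  · rw [hN, Set.insert_comm]
    exact (hcov'.neighborSet_subset_of_deleteEdges hv).trans (Set.subset_insert _ _)

theorem isMaximalMatching_within_sup_within_compl {M M' : G.Subgraph} {S : Set V}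
    (hM : M.IsMatching) (hM' : M'.IsMatching)
    (hin : ∀ ⦃p q⦄, G.Adj p q → p ∈ S → q ∈ S →
      p ∈ (M.within S).verts ∨ q ∈ (M.within S).verts)
    (hout : ∀ ⦃p q⦄, G.Adj p q → p ∈ Sᶜ → q ∈ Sᶜ →
      p ∈ (M'.within Sᶜ).verts ∨ q ∈ (M'.within Sᶜ).verts)
    (hcross : ∀ ⦃p q⦄, G.Adj p q → p ∈ S → q ∉ S →
      p ∈ (M.within S).verts ∨ q ∈ (M'.within Sᶜ).verts) :
    IsMaximalMatching G (M.within S ⊔ M'.within Sᶜ) := by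
  refine isMaximalMatching_iff_s11.2 ⟨hM.within_sup_within_compl hM', fun p q hpq => ?_⟩
  simp only [Subgraph.verts_sup, Set.mem_union]
  by_cases hp : p ∈ S <;> by_cases hq : q ∈ S
  · have := hin hpq hp hq
    tauto
  · have := hcross hpq hp hq
    tauto
  · have := hcross hpq.symm hq hp
    tauto
  · have := hout hpq hp hq
    tauto

theorem IsMaximalMatching.mem_or_mem_within_verts {M : G.Subgraph} {S : Set V} {c v : V}
    (hM : IsMaximalMatching G M) (hS : G.IsSeparatedBy S v) (hcv : M.Adj c v)
    (hc : G.neighborSet c ⊆ M.verts) (hv : G.neighborSet v ⊆ M.verts) ⦃p q : V⦄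
    (hpq : G.Adj p q) (hp : p ∈ S) (hq : q ∈ S) :
    p ∈ (M.within S).verts ∨ q ∈ (M.within S).verts := by
  obtain ⟨hMm, hcov⟩ := isMaximalMatching_iff_s11.1 hM
  have hend : ∀ ⦃a b⦄, G.Adj a b → a ∈ S → b ∈ S → a = c ∨ a = v →
      a ∈ (M.within S).verts ∨ b ∈ (M.within S).verts := by
    intro a b hab ha hb hac
    have hbM : b ∈ M.verts := by
      rcases hac with rfl | rfl
      exacts [hc hab, hv hab]
    by_cases hbc : b = c ∨ b = v
    · refine Or.inl (Subgraph.mem_within_verts ?_ ha hb)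
      rcases hac with rfl | rfl <;> rcases hbc with rfl | rfl
      exacts [(G.irrefl hab).elim, hcv, hcv.symm, (G.irrefl hab).elim]
    · obtain ⟨hbc, hbv⟩ := not_or.1 hbc
      exact Or.inr (hMm.mem_within_verts_of_ne hS hcv hbM hb hbc hbv)
  by_cases hp' : p = c ∨ p = v
  · exact hend hpq hp hq hp'
  by_cases hq' : q = c ∨ q = v
  · exact (hend hpq.symm hq hp hq').symm
  obtain ⟨hpc, hpv⟩ := not_or.1 hp'
  obtain ⟨hqc, hqv⟩ := not_or.1 hq'
  rcases hcov hpq with h | h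
  · exact Or.inl (hMm.mem_within_verts_of_ne hS hcv h hp hpc hpv)
  · exact Or.inr (hMm.mem_within_verts_of_ne hS hcv h hq hqc hqv)

theorem not_equimatchable_of_isSeparatedBy [Finite V] {S : Set V} {v x y : V}
    (hS : G.IsSeparatedBy S v) (hvS : v ∉ S) (hxS : x ∈ S) (hyS : y ∉ S) {N N' : G.Subgraph}
    (hN : IsMaximalMatching G N) (hxv : N.Adj x v) (hNx : G.neighborSet x ⊆ N.verts)
    (hNv : G.neighborSet v ⊆ N.verts) (hN' : IsMaximalMatching G N') (hyv : N'.Adj y v)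
    (hN'y : G.neighborSet y ⊆ N'.verts) (hN'v : G.neighborSet v ⊆ N'.verts) :
    ¬ Equimatchable G := by
  intro hEq
  have hcross : ∀ ⦃p q⦄, G.Adj p q → p ∈ S → q ∉ S → q = v := fun p q hpq hp hq =>
    (hS hpq hp hq).resolve_left (ne_of_mem_of_not_mem hp hvS)
  have hW₁ : IsMaximalMatching G (N.within S ⊔ N'.within Sᶜ) :=
    isMaximalMatching_within_sup_within_compl hN.1 hN'.1
      (hN.mem_or_mem_within_verts hS hxv hNx hNv)
      (hN'.mem_or_mem_within_verts hS.compl hyv hN'y hN'v)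
      fun p q hpq hp hq => Or.inr <| by
        rw [hcross hpq hp hq]
        exact Subgraph.mem_within_verts hyv.symm hvS hyS
  have hW₂ : IsMaximalMatching G (N'.within S ⊔ N.within Sᶜ) :=
    isMaximalMatching_within_sup_within_compl hN'.1 hN.1
      (hN'.mem_or_mem_within_verts hS hyv hN'y hN'v)
      (hN.mem_or_mem_within_verts hS.compl hxv hNx hNv)
      fun p q hpq hp hq => Or.inl <| by
        refine hN'.1.mem_within_verts_of_ne hS hyv (hN'v ?_) hp (ne_of_mem_of_not_mem hp hyS)
          (ne_of_mem_of_not_mem hp hvS)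
        exact (hcross hpq hp hq ▸ hpq).symm
  have hN_lt : (N.within S ⊔ N.within Sᶜ).edgeSet.ncard < N.edgeSet.ncard :=
    Subgraph.ncard_edgeSet_lt_of_le Subgraph.within_sup_within_compl_le hxv fun h =>
      h.elim (fun h => hvS h.2.2) fun h => h.2.1 hxS
  have hN'_le : (N'.within S ⊔ N'.within Sᶜ).edgeSet.ncard ≤ N'.edgeSet.ncard :=
    Set.ncard_le_ncard (Subgraph.edgeSet_mono Subgraph.within_sup_within_compl_le)
      (Set.toFinite _)
  have h₁ := hEq _ _ hN hW₁
  have h₂ := hEq _ _ hN' hW₂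
  have h₃ := hEq _ _ hN hN'
  simp only [Subgraph.ncard_edgeSet_within_sup_within_compl] at hN_lt hN'_le h₁ h₂
  omega

end

/-- Every connected edge-critical equimatchable graph with at least one edge is
2-connected. -/
theorem ece_twoConnected {V : Type*} [Fintype V] (G : SimpleGraph V)
    (hconn : G.Connected) (hedge : G.edgeSet.Nonempty) (hece : ECE G) :
    TwoConnected G := by
  obtain ⟨hEq, hCrit⟩ := hece
  obtain ⟨u, w, huw⟩ := Sym2.exists.1 hedge
  have hcard := three_le_card_of_not_equimatchable_deleteEdges huw (hCrit u w huw)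
  refine ⟨hcard, hconn, fun v => (connected_iff _).2 ⟨?_, ?_⟩⟩
  · by_contra hpre
    obtain ⟨S, hS, hvS, ⟨x, hxS, hxv⟩, y, hyS, hyv⟩ :=
      exists_isSeparatedBy_of_not_preconnected hconn hpre
    obtain ⟨N, hN, hNxv, hNx, hNv⟩ :=
      hEq.exists_isMaximalMatching_adj_neighborSet_subset hxv (hCrit x v hxv)
    obtain ⟨N', hN', hN'yv, hN'y, hN'v⟩ :=
      hEq.exists_isMaximalMatching_adj_neighborSet_subset hyv (hCrit y v hyv)
    exact not_equimatchable_of_isSeparatedBy hS hvS hxS hyS hN hNxv hNx hNv hN' hN'yv hN'y hN'v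
      hEq
  · obtain ⟨a, ha⟩ := Fintype.exists_ne_of_one_lt_card (by omega) v
    exact ⟨⟨a, ha⟩⟩
end
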